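/- arXiv:2406.02981 — 6 statements merged into one kernel-verified Lean document; each statement's English description precedes it below -/
import Mathlib

section
/- Let f : {0,1}^n → {0,1} be a Boolean function and x ∈ {0,1}^n. A feature i ∈ {1,…,n} is locally necessary for (f,x) if and only if the singleton {i} is a local contrastive reason for (f,x). -/
/-- `comb S x z` is the input that equals `x` on coordinates in `S` and `z` outside `S`. -/
def comb {n : ℕ} (S : Finset (Fin n)) (x z : Fin n → Bool) : Fin n → Bool :=
  fun i => if i ∈ S then x i else z i

/-- `S` is a local sufficient reason for `(f, x)`. -/
def LocalSuff {n : ℕ} (f : (Fin n → Bool) → Bool) (x : Fin n → Bool)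
    (S : Finset (Fin n)) : Prop :=
  ∀ z : Fin n → Bool, f (comb S x z) = f x

/-- `S` is a local contrastive reason for `(f, x)`: some change of the features
in `S` (keeping `x` outside `S`) changes the prediction. -/
def LocalContrastive {n : ℕ} (f : (Fin n → Bool) → Bool) (x : Fin n → Bool)
    (S : Finset (Fin n)) : Prop :=
  ∃ z : Fin n → Bool, f (comb S z x) ≠ f x

/-- Feature `i` is locally necessary for `(f, x)`. -/
def LocallyNecessary {n : ℕ} (f : (Fin n → Bool) → Bool) (x : Fin n → Bool)
    (i : Fin n) : Prop :=
  ∀ S : Finset (Fin n), LocalSuff f x S → ¬ LocalSuff f x (S.erase i)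

/-!
Sufficiency is upward closed, and `S` is contrastive exactly when its complement is not
sufficient. Hence `i` is necessary iff the largest set avoiding `i`, namely `{i}ᶜ`, is not
sufficient, i.e. iff `{i}` is contrastive.
-/

section

variable {n : ℕ}

theorem comb_compl (S : Finset (Fin n)) (x z : Fin n → Bool) :
    comb Sᶜ x z = comb S z x := by
  funext j
  by_cases hj : j ∈ S <;> simp [comb, hj]

theorem comb_comb_of_subset {S T : Finset (Fin n)} (hST : S ⊆ T) (x z : Fin n → Bool) :
    comb S x (comb T x z) = comb T x z := by
  funext j
  by_cases hj : j ∈ S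
  · simp [comb, hj, hST hj]
  · simp [comb, hj]

variable {f : (Fin n → Bool) → Bool} {x : Fin n → Bool}

theorem LocalSuff.mono {S T : Finset (Fin n)} (hS : LocalSuff f x S) (hST : S ⊆ T) :
    LocalSuff f x T := fun z => by
  rw [← comb_comb_of_subset hST x z]
  exact hS _

theorem localContrastive_iff_not_localSuff_compl (S : Finset (Fin n)) :
    LocalContrastive f x S ↔ ¬ LocalSuff f x Sᶜ := by
  simp only [LocalContrastive, LocalSuff, comb_compl, not_forall]

theorem localSuff_univ : LocalSuff f x Finset.univ := fun z => by
  congr 1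
  funext j
  simp [comb]

theorem locallyNecessary_iff_not_localSuff_compl_singleton (i : Fin n) :
    LocallyNecessary f x i ↔ ¬ LocalSuff f x {i}ᶜ := by
  rw [Finset.compl_singleton]
  constructor
  · exact fun h => h _ localSuff_univ
  · exact fun h S _ hS => h (hS.mono (Finset.erase_subset_erase i (Finset.subset_univ S)))

end

theorem necessity_iff_singleton_contrastive {n : ℕ}
    (f : (Fin n → Bool) → Bool) (x : Fin n → Bool) (i : Fin n) :
    LocallyNecessary f x i ↔ LocalContrastive f x {i} := by
  rw [locallyNecessary_iff_not_localSuff_compl_singleton,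
    localContrastive_iff_not_localSuff_compl]
end

section
/- Let f : {0,1}^n → {0,1} be a Boolean function. Every global contrastive reason S of f has nonempty intersection with every local sufficient reason of (f,x), for every x ∈ {0,1}^n. -/
/-- `S` is a global contrastive reason for `f`. -/
def GlobalContrastive {n : ℕ} (f : (Fin n → Bool) → Bool) (S : Finset (Fin n)) : Prop :=
  ∀ x : Fin n → Bool, ∃ z : Fin n → Bool, f (comb S z x) ≠ f x

theorem comb_comb_of_disjoint {n : ℕ} {S T : Finset (Fin n)} (hST : Disjoint S T)
    (x z : Fin n → Bool) : comb T x (comb S z x) = comb S z x := by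
  funext i
  by_cases hiT : i ∈ T
  · have hiS : i ∉ S := Finset.disjoint_right.mp hST hiT
    simp [comb, hiT, hiS]
  · simp [comb, hiT]

theorem LocalSuff.apply_comb_of_disjoint {n : ℕ} {f : (Fin n → Bool) → Bool}
    {x : Fin n → Bool} {T : Finset (Fin n)} (hT : LocalSuff f x T) {S : Finset (Fin n)}
    (hST : Disjoint S T) (z : Fin n → Bool) : f (comb S z x) = f x := by
  rw [← comb_comb_of_disjoint hST x z, hT]

theorem global_contrastive_hits_local_suff {n : ℕ}
    (f : (Fin n → Bool) → Bool) (S : Finset (Fin n)) (hS : GlobalContrastive f S)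
    (x : Fin n → Bool) (T : Finset (Fin n)) (hT : LocalSuff f x T) :
    (S ∩ T).Nonempty := by
  rw [← Finset.not_disjoint_iff_nonempty_inter]
  intro hST
  obtain ⟨z, hz⟩ := hS x
  exact hz (hT.apply_comb_of_disjoint hST z)
end

section
/- Let n ≥ 1, let f : {0,1}^n → {0,1} be the threshold function defined by f(y) = 1 if and only if the number of coordinates of y equal to 1 is at least ⌊n/2⌋, and let x = (1,…,1) be the all-ones input. Then a subset S ⊆ {1,…,n} is a subset-minimal local sufficient reason for (f,x) if and only if |S| = ⌊n/2⌋; consequently, the number of subset-minimal local sufficient reasons for (f,x) equals the binomial coefficient C(n, ⌊n/2⌋), and every subset-minimal local sufficient reason for (f,x) is also of minimum cardinality among local sufficient reasons for (f,x). -/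
/-- `S` is a subset-minimal local sufficient reason for `(f, x)`. -/
def SubsetMinimalLocalSuff {n : ℕ} (f : (Fin n → Bool) → Bool) (x : Fin n → Bool)
    (S : Finset (Fin n)) : Prop :=
  LocalSuff f x S ∧ ∀ T : Finset (Fin n), T ⊂ S → ¬ LocalSuff f x T

open Finset

section

variable {n k : ℕ} {f : (Fin n → Bool) → Bool} {x : Fin n → Bool}

theorem subsetMinimalLocalSuff_iff_card_eq (hsuff : ∀ S, LocalSuff f x S ↔ k ≤ #S)
    (S : Finset (Fin n)) : SubsetMinimalLocalSuff f x S ↔ #S = k := by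
  simp only [SubsetMinimalLocalSuff, hsuff]
  constructor
  · rintro ⟨hkS, hmin⟩
    by_contra hne
    obtain ⟨i, hi⟩ : S.Nonempty := card_pos.mp (by omega)
    exact hmin (S.erase i) (erase_ssubset hi) (by rw [card_erase_of_mem hi]; omega)
  · rintro rfl
    exact ⟨le_rfl, fun T hT hkT => (card_lt_card hT).not_ge hkT⟩

theorem card_le_of_subsetMinimalLocalSuff (hsuff : ∀ S, LocalSuff f x S ↔ k ≤ #S)
    {S T : Finset (Fin n)} (hS : SubsetMinimalLocalSuff f x S) (hT : LocalSuff f x T) :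
    #S ≤ #T :=
  (subsetMinimalLocalSuff_iff_card_eq hsuff S |>.mp hS).trans_le ((hsuff T).mp hT)

theorem card_subsetMinimalLocalSuff (hsuff : ∀ S, LocalSuff f x S ↔ k ≤ #S) :
    Nat.card {S : Finset (Fin n) // SubsetMinimalLocalSuff f x S} = n.choose k := by
  rw [Nat.card_congr (Equiv.subtypeEquivRight (subsetMinimalLocalSuff_iff_card_eq hsuff)),
    Nat.card_eq_fintype_card, Fintype.card_finset_len, Fintype.card_fin]

theorem filter_comb_eq_true_of_forall_eq_true (hx : ∀ i, x i = true) (S : Finset (Fin n))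
    (z : Fin n → Bool) :
    univ.filter (fun i => comb S x z i = true) = S ∪ univ.filter (fun i => z i = true) := by
  ext i
  by_cases hi : i ∈ S <;> simp [comb, hi, hx i]

theorem localSuff_threshold_iff (hf : ∀ y, f y = true ↔ k ≤ #(univ.filter (fun i => y i = true)))
    (hk : k ≤ n) (hx : ∀ i, x i = true) (S : Finset (Fin n)) :
    LocalSuff f x S ↔ k ≤ #S := by
  have hfx : f x = true := (hf x).mpr (by simpa [hx] using hk)
  simp only [LocalSuff, hfx, hf, filter_comb_eq_true_of_forall_eq_true hx]
  constructor
  · intro h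
    simpa using h fun _ => false
  · exact fun hkS z => hkS.trans (card_le_card subset_union_left)

end

theorem threshold_minimal_suff_reasons_general {n : ℕ}
    (f : (Fin n → Bool) → Bool)
    (hf : ∀ y : Fin n → Bool,
      f y = true ↔ n / 2 ≤ (Finset.univ.filter (fun i => y i = true)).card)
    (x : Fin n → Bool) (hx : ∀ i, x i = true) :
    (∀ S : Finset (Fin n), SubsetMinimalLocalSuff f x S ↔ S.card = n / 2) ∧
    Nat.card {S : Finset (Fin n) // SubsetMinimalLocalSuff f x S} =
      Nat.choose n (n / 2) ∧
    (∀ S : Finset (Fin n), SubsetMinimalLocalSuff f x S →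
      ∀ T : Finset (Fin n), LocalSuff f x T → S.card ≤ T.card) := by
  have hsuff := localSuff_threshold_iff hf (Nat.div_le_self n 2) hx
  exact ⟨subsetMinimalLocalSuff_iff_card_eq hsuff, card_subsetMinimalLocalSuff hsuff,
    fun _ hS _ hT => card_le_of_subsetMinimalLocalSuff hsuff hS hT⟩

theorem threshold_minimal_suff_reasons {n : ℕ} (hn : 1 ≤ n)
    (f : (Fin n → Bool) → Bool)
    (hf : ∀ y : Fin n → Bool,
      f y = true ↔ n / 2 ≤ (Finset.univ.filter (fun i => y i = true)).card)
    (x : Fin n → Bool) (hx : ∀ i, x i = true) :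
    (∀ S : Finset (Fin n), SubsetMinimalLocalSuff f x S ↔ S.card = n / 2) ∧
    Nat.card {S : Finset (Fin n) // SubsetMinimalLocalSuff f x S} =
      Nat.choose n (n / 2) ∧
    (∀ S : Finset (Fin n), SubsetMinimalLocalSuff f x S →
      ∀ T : Finset (Fin n), LocalSuff f x T → S.card ≤ T.card) :=
  threshold_minimal_suff_reasons_general f hf x hx
end

section
/- Let f : {0,1}^n → {0,1} be a non-trivial Boolean function and let S₁ and S₂ be two global sufficient reasons for f. Then S = S₁ ∩ S₂ is nonempty, and S is a global sufficient reason for f. -/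
/-- `S` is a global sufficient reason for `f`. -/
def GlobalSuff {n : ℕ} (f : (Fin n → Bool) → Bool) (S : Finset (Fin n)) : Prop :=
  ∀ x z : Fin n → Bool, f (comb S x z) = f x

@[simp]
theorem comb_empty {n : ℕ} (x z : Fin n → Bool) : comb ∅ x z = z := by
  funext i
  simp [comb]

theorem comb_comb_inter {n : ℕ} (S₁ S₂ : Finset (Fin n)) (x z : Fin n → Bool) :
    comb S₂ (comb (S₁ ∩ S₂) x z) x = comb S₁ x (comb S₂ z x) := by
  funext i
  by_cases h₁ : i ∈ S₁ <;> by_cases h₂ : i ∈ S₂ <;> simp [comb, h₁, h₂]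

namespace GlobalSuff

variable {n : ℕ} {f : (Fin n → Bool) → Bool} {S₁ S₂ : Finset (Fin n)}

theorem inter (h₁ : GlobalSuff f S₁) (h₂ : GlobalSuff f S₂) : GlobalSuff f (S₁ ∩ S₂) := by
  intro x z
  calc f (comb (S₁ ∩ S₂) x z) = f (comb S₂ (comb (S₁ ∩ S₂) x z) x) := (h₂ _ _).symm
    _ = f (comb S₁ x (comb S₂ z x)) := by rw [comb_comb_inter]
    _ = f x := h₁ _ _

theorem apply_eq_of_empty (h : GlobalSuff f ∅) (x y : Fin n → Bool) : f x = f y := by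
  simpa using h y x

end GlobalSuff

theorem global_suff_inter {n : ℕ}
    (f : (Fin n → Bool) → Bool)
    (hf : ∃ x y : Fin n → Bool, f x = true ∧ f y = false)
    (S₁ S₂ : Finset (Fin n)) (h₁ : GlobalSuff f S₁) (h₂ : GlobalSuff f S₂) :
    (S₁ ∩ S₂).Nonempty ∧ GlobalSuff f (S₁ ∩ S₂) := by
  have hinter := h₁.inter h₂
  refine ⟨Finset.nonempty_iff_ne_empty.mpr fun hempty => ?_, hinter⟩
  obtain ⟨x, y, hx, hy⟩ := hf
  have hxy := (hempty ▸ hinter).apply_eq_of_empty x y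
  simp [hx, hy] at hxy
end

section
/- Let f : {0,1}^n → {0,1} be a Boolean function. Every feature i ∈ {1,…,n} is either locally necessary for (f,x) for some x ∈ {0,1}^n, or globally redundant for f. -/
/-- Feature `i` is globally redundant for `f`. -/
def GloballyRedundant {n : ℕ} (f : (Fin n → Bool) → Bool) (i : Fin n) : Prop :=
  ∀ (x : Fin n → Bool) (S : Finset (Fin n)),
    LocalSuff f x S → LocalSuff f x (S.erase i)

/-!
If flipping feature `i` alone changes `f` somewhere, say between `x` and `x'`, then `i` is
locally necessary at `x`: a sufficient reason at `x` that omits `i` would let us fill in the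
remaining coordinates from `x'` and force `f x' = f x`. Such a pair exists unless `i` is globally
redundant: if `S` is sufficient at `x` but `S \ {i}` is not, as witnessed by `z`, then the inputs
taking `x` on `S`, resp. on `S \ {i}`, and `z` elsewhere differ only at `i` and have different values.
-/

section

variable {n : ℕ}

def Relevant (f : (Fin n → Bool) → Bool) (i : Fin n) : Prop :=
  ∃ x x' : Fin n → Bool, (∀ j ≠ i, x j = x' j) ∧ f x ≠ f x'

theorem comb_erase_apply_of_ne (S : Finset (Fin n)) (x z : Fin n → Bool) {i j : Fin n}
    (hj : j ≠ i) : comb (S.erase i) x z j = comb S x z j := by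
  simp only [comb, Finset.mem_erase, hj, ne_eq, not_false_eq_true, true_and]

theorem comb_erase_eq_of_forall_ne (S : Finset (Fin n)) {x x' : Fin n → Bool} {i : Fin n}
    (h : ∀ j ≠ i, x j = x' j) : comb (S.erase i) x x' = x' := by
  funext j
  by_cases hj : j ∈ S.erase i
  · simp only [comb, hj, if_true, h j (Finset.ne_of_mem_erase hj)]
  · simp only [comb, hj, if_false]

theorem locallyNecessary_of_forall_ne {f : (Fin n → Bool) → Bool} {x x' : Fin n → Bool}
    {i : Fin n} (h : ∀ j ≠ i, x j = x' j) (hf : f x ≠ f x') : LocallyNecessary f x i := by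
  intro S _ hsuff
  have := hsuff x'
  rw [comb_erase_eq_of_forall_ne S h] at this
  exact hf this.symm

theorem Relevant.exists_locallyNecessary {f : (Fin n → Bool) → Bool} {i : Fin n}
    (h : Relevant f i) : ∃ x, LocallyNecessary f x i :=
  let ⟨x, _, hx, hf⟩ := h
  ⟨x, locallyNecessary_of_forall_ne hx hf⟩

theorem relevant_of_not_globallyRedundant {f : (Fin n → Bool) → Bool} {i : Fin n}
    (h : ¬ GloballyRedundant f i) : Relevant f i := by
  simp only [GloballyRedundant, LocalSuff, not_forall] at h
  obtain ⟨x, S, hS, z, hz⟩ := h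
  refine ⟨comb S x z, comb (S.erase i) x z, fun j hj => (comb_erase_apply_of_ne S x z hj).symm, ?_⟩
  rw [hS z]
  exact Ne.symm hz

end

theorem necessary_or_redundant {n : ℕ}
    (f : (Fin n → Bool) → Bool) (i : Fin n) :
    (∃ x : Fin n → Bool, LocallyNecessary f x i) ∨ GloballyRedundant f i := by
  by_cases h : GloballyRedundant f i
  · exact Or.inr h
  · exact Or.inl (relevant_of_not_globallyRedundant h).exists_locallyNecessary
end

section
/- Let w ∈ ℚⁿ, b ∈ ℚ, and let f : {0,1}^n → {0,1} be the Perceptron defined by f(y) = 1 if and only if ∑ᵢ wᵢ·yᵢ + b > 0 (where the binary coordinates yᵢ are interpreted as the rationals 0 and 1). For every x ∈ {0,1}^n and every S ⊆ {1,…,n}, S is a local sufficient reason for (f,x) if and only if either ∑_{i∈S} wᵢ·xᵢ + ∑_{i∉S} max(wᵢ, 0) + b ≤ 0, or ∑_{i∈S} wᵢ·xᵢ + ∑_{i∉S} min(wᵢ, 0) + b > 0. -/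
/-- Interpret a binary coordinate as the rational `0` or `1`. -/
def bval (b : Bool) : ℚ := if b then 1 else 0

theorem forall_lt_apply_iff_iff_of_isLeast_of_isGreatest {α β : Type*} [LinearOrder β]
    {g : α → β} {lo hi : β} (hlo : IsLeast (Set.range g) lo) (hhi : IsGreatest (Set.range g) hi)
    (t : β) (z₀ : α) :
    (∀ z, t < g z ↔ t < g z₀) ↔ hi ≤ t ∨ t < lo := by
  constructor
  · intro h
    by_cases h₀ : t < g z₀
    · obtain ⟨zmin, hzmin⟩ := hlo.1
      exact Or.inr (hzmin ▸ (h zmin).2 h₀)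
    · obtain ⟨zmax, hzmax⟩ := hhi.1
      exact Or.inl (not_lt.1 fun ht => h₀ ((h zmax).1 (hzmax ▸ ht)))
  · rintro (h | h) z
    · exact iff_of_false (not_lt.2 ((hhi.2 ⟨z, rfl⟩).trans h))
        (not_lt.2 ((hhi.2 ⟨z₀, rfl⟩).trans h))
    · exact iff_of_true (h.trans_le (hlo.2 ⟨z, rfl⟩)) (h.trans_le (hlo.2 ⟨z₀, rfl⟩))

theorem mul_bval_le_max (w : ℚ) (c : Bool) : w * bval c ≤ max w 0 := by
  cases c <;> simp [bval]

theorem min_le_mul_bval (w : ℚ) (c : Bool) : min w 0 ≤ w * bval c := by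
  cases c <;> simp [bval]

theorem mul_bval_decide_pos (w : ℚ) : w * bval (decide (0 < w)) = max w 0 := by
  by_cases hw : 0 < w
  · simp [bval, hw, hw.le]
  · simp [bval, hw, not_lt.1 hw]

theorem mul_bval_decide_neg (w : ℚ) : w * bval (decide (w < 0)) = min w 0 := by
  by_cases hw : w < 0
  · simp [bval, hw, hw.le]
  · simp [bval, hw, not_lt.1 hw]

theorem isGreatest_range_sum_mul_bval {ι : Type*} (T : Finset ι) (w : ι → ℚ) :
    IsGreatest (Set.range fun z : ι → Bool => ∑ i ∈ T, w i * bval (z i))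
      (∑ i ∈ T, max (w i) 0) :=
  ⟨⟨fun i => decide (0 < w i), Finset.sum_congr rfl fun i _ => mul_bval_decide_pos (w i)⟩,
    by rintro _ ⟨z, rfl⟩; exact Finset.sum_le_sum fun i _ => mul_bval_le_max (w i) (z i)⟩

theorem isLeast_range_sum_mul_bval {ι : Type*} (T : Finset ι) (w : ι → ℚ) :
    IsLeast (Set.range fun z : ι → Bool => ∑ i ∈ T, w i * bval (z i))
      (∑ i ∈ T, min (w i) 0) :=
  ⟨⟨fun i => decide (w i < 0), Finset.sum_congr rfl fun i _ => mul_bval_decide_neg (w i)⟩,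
    by rintro _ ⟨z, rfl⟩; exact Finset.sum_le_sum fun i _ => min_le_mul_bval (w i) (z i)⟩

theorem comb_self {n : ℕ} (S : Finset (Fin n)) (x : Fin n → Bool) : comb S x x = x :=
  funext fun _ => ite_self _

theorem sum_mul_bval_comb {n : ℕ} (w : Fin n → ℚ) (S : Finset (Fin n)) (x z : Fin n → Bool) :
    ∑ i, w i * bval (comb S x z i) =
      (∑ i ∈ S, w i * bval (x i)) + ∑ i ∈ Sᶜ, w i * bval (z i) := by
  rw [← Finset.sum_add_sum_compl S]
  congr 1
  · exact Finset.sum_congr rfl fun i hi => by simp [comb, hi]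
  · exact Finset.sum_congr rfl fun i hi => by simp [comb, Finset.mem_compl.1 hi]

theorem perceptron_local_suff_iff {n : ℕ} (w : Fin n → ℚ) (b : ℚ)
    (f : (Fin n → Bool) → Bool)
    (hf : ∀ y : Fin n → Bool, f y = true ↔ 0 < (∑ i, w i * bval (y i)) + b)
    (x : Fin n → Bool) (S : Finset (Fin n)) :
    LocalSuff f x S ↔
      ((∑ i ∈ S, w i * bval (x i)) + (∑ i ∈ Sᶜ, max (w i) 0) + b ≤ 0 ∨
        0 < (∑ i ∈ S, w i * bval (x i)) + (∑ i ∈ Sᶜ, min (w i) 0) + b) := by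
  set A := ∑ i ∈ S, w i * bval (x i)
  have hcomb : ∀ z, f (comb S x z) = true ↔ -(A + b) < ∑ i ∈ Sᶜ, w i * bval (z i) := by
    intro z
    rw [hf, sum_mul_bval_comb]
    constructor <;> intro h <;> linarith
  have hsuff : LocalSuff f x S ↔ ∀ z, (f (comb S x z) = true ↔ f (comb S x x) = true) := by
    rw [comb_self]
    exact forall_congr' fun z => Bool.eq_iff_iff
  rw [hsuff]
  simp only [hcomb]
  rw [forall_lt_apply_iff_iff_of_isLeast_of_isGreatest (isLeast_range_sum_mul_bval Sᶜ w)
    (isGreatest_range_sum_mul_bval Sᶜ w)]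
  apply or_congr <;> constructor <;> intro h <;> linarith
end
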